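/- arXiv:1307.7655 — 4 statements merged into one kernel-verified Lean document; each statement's English description precedes it below -/
import Mathlib

section
/- Let 1 < α' and α' + 1/2 < α ≤ 2. If a : ℤ → ℂ is a sequence such that there is a constant C with |∑_{k=-n}^{n} a_k z^k| ≤ C · n^(α'-1) / (log n)^(α') for every n ≥ 2 and every z on the unit circle, then there is a constant C' such that ∑_{k=-n}^{n} |a_k| ≤ C' · n^(α-1) / (log n)^α for every n ≥ 2. -/
open Real Finset ComplexConjugate

/-! Sampling `P z = ∑_{|k| ≤ n} a k * z ^ k` at the `(2n+1)`-th roots of unity and using their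
orthogonality (discrete Parseval) gives `∑ |a k|² ≤ sup_{|z|=1} |P z|²`; Cauchy–Schwarz then gives
`∑ |a k| ≤ √(2n+1) · sup |P|`. The extra factor `√n` is absorbed because `α - α' > 1/2` and
`(log n) ^ (α - α') = O(n ^ (α - α' - 1/2))`. -/

namespace IsPrimitiveRoot

theorem geom_sum_zpow_eq_ite {K : Type*} [Field K] {ζ : K} {N : ℕ} (hζ : IsPrimitiveRoot ζ N)
    (m : ℤ) : ∑ j ∈ range N, (ζ ^ m) ^ j = if (N : ℤ) ∣ m then (N : K) else 0 := by
  split_ifs with hm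
  · simp [(hζ.zpow_eq_one_iff_dvd m).2 hm]
  · rw [geom_sum_eq (mt (hζ.zpow_eq_one_iff_dvd m).1 hm), ← zpow_natCast, ← zpow_mul, mul_comm,
      zpow_mul, zpow_natCast, hζ.pow_eq_one, one_zpow, sub_self, zero_div]

end IsPrimitiveRoot

theorem Complex.sq_norm_sum_mul_zpow (s : Finset ℤ) (a : ℤ → ℂ) {w : ℂ} (hw : ‖w‖ = 1) :
    ((‖∑ k ∈ s, a k * w ^ k‖ ^ 2 : ℝ) : ℂ) =
      ∑ k ∈ s, ∑ l ∈ s, a k * conj (a l) * w ^ (k - l) := by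
  have hw0 : w ≠ 0 := norm_ne_zero_iff.mp (by rw [hw]; exact one_ne_zero)
  rw [Complex.ofReal_pow, ← Complex.mul_conj', map_sum, sum_mul_sum]
  refine sum_congr rfl fun k _ => sum_congr rfl fun l _ => ?_
  rw [map_mul, map_zpow₀, ← Complex.inv_eq_conj hw, inv_zpow, zpow_sub₀ hw0]
  ring

theorem IsPrimitiveRoot.sum_sq_norm_sum_mul_zpow {ζ : ℂ} {N : ℕ} (hζ : IsPrimitiveRoot ζ N)
    {s : Finset ℤ} (hs : Set.InjOn (fun k : ℤ => (k : ZMod N)) s) (a : ℤ → ℂ) :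
    ∑ j ∈ range N, ‖∑ k ∈ s, a k * (ζ ^ j) ^ k‖ ^ 2 = N * ∑ k ∈ s, ‖a k‖ ^ 2 := by
  rcases N.eq_zero_or_pos with rfl | hN
  · simp
  have hsample : ∀ j : ℕ, ((‖∑ k ∈ s, a k * (ζ ^ j) ^ k‖ ^ 2 : ℝ) : ℂ) =
      ∑ k ∈ s, ∑ l ∈ s, a k * conj (a l) * (ζ ^ (k - l)) ^ j := fun j => by
    rw [Complex.sq_norm_sum_mul_zpow s a (by rw [norm_pow, hζ.norm'_eq_one hN.ne', one_pow])]
    simp only [← zpow_natCast, ← zpow_mul, mul_comm]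
  have horth : ∀ k ∈ s, ∀ l ∈ s,
      ∑ j ∈ range N, (ζ ^ (k - l)) ^ j = if l = k then (N : ℂ) else 0 := fun k hk l hl => by
    rw [hζ.geom_sum_zpow_eq_ite]
    refine if_congr ?_ rfl rfl
    rw [← ZMod.intCast_eq_intCast_iff_dvd_sub]
    exact ⟨(hs hl hk ·), congrArg _⟩
  apply Complex.ofReal_injective
  rw [Complex.ofReal_sum, sum_congr rfl fun j _ => hsample j, sum_comm]
  calc ∑ k ∈ s, ∑ j ∈ range N, ∑ l ∈ s, a k * conj (a l) * (ζ ^ (k - l)) ^ j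
      = ∑ k ∈ s, ∑ l ∈ s, a k * conj (a l) * if l = k then (N : ℂ) else 0 := by
        refine sum_congr rfl fun k hk => ?_
        rw [sum_comm]
        exact sum_congr rfl fun l hl => by rw [← mul_sum, horth k hk l hl]
    _ = _ := by
        push_cast
        rw [mul_sum]
        refine sum_congr rfl fun k hk => ?_
        simp only [mul_ite, mul_zero, sum_ite_eq', if_pos hk]
        rw [Complex.mul_conj', mul_comm]

theorem sum_sq_norm_le_sq_of_norm_sum_mul_zpow_le (s : Finset ℤ) (a : ℤ → ℂ) {B : ℝ}
    (h : ∀ z : ℂ, ‖z‖ = 1 → ‖∑ k ∈ s, a k * z ^ k‖ ≤ B) : ∑ k ∈ s, ‖a k‖ ^ 2 ≤ B ^ 2 := by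
  -- a modulus exceeding the diameter of `s` separates its points
  set N := 2 * ∑ k ∈ s, k.natAbs + 1
  have hs : Set.InjOn (fun k : ℤ => (k : ZMod N)) s := by
    intro k hk l hl hkl
    have hdvd := Int.natCast_dvd.1 ((ZMod.intCast_eq_intCast_iff_dvd_sub k l N).1 hkl)
    have hk' : k.natAbs ≤ ∑ k ∈ s, k.natAbs := single_le_sum (fun _ _ => Nat.zero_le _) hk
    have hl' : l.natAbs ≤ ∑ k ∈ s, k.natAbs := single_le_sum (fun _ _ => Nat.zero_le _) hl
    have := Nat.eq_zero_of_dvd_of_lt hdvd (by omega)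
    omega
  obtain ⟨ζ, hζ⟩ : ∃ ζ : ℂ, IsPrimitiveRoot ζ N := ⟨_, Complex.isPrimitiveRoot_exp N (by omega)⟩
  have hsamples : ∑ j ∈ range N, ‖∑ k ∈ s, a k * (ζ ^ j) ^ k‖ ^ 2 ≤ N * B ^ 2 := by
    calc _ ≤ ∑ _j ∈ range N, B ^ 2 := sum_le_sum fun j _ => pow_le_pow_left₀ (norm_nonneg _)
            (h _ (by rw [norm_pow, hζ.norm'_eq_one (by omega), one_pow])) 2
      _ = N * B ^ 2 := by rw [sum_const, card_range, nsmul_eq_mul]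
  rw [hζ.sum_sq_norm_sum_mul_zpow hs a] at hsamples
  exact le_of_mul_le_mul_left hsamples (by positivity)

theorem sum_norm_le_sqrt_card_mul_of_norm_sum_mul_zpow_le (s : Finset ℤ) (a : ℤ → ℂ) {B : ℝ}
    (h : ∀ z : ℂ, ‖z‖ = 1 → ‖∑ k ∈ s, a k * z ^ k‖ ≤ B) : ∑ k ∈ s, ‖a k‖ ≤ √(#s : ℝ) * B := by
  have hB : 0 ≤ B := (norm_nonneg _).trans (h 1 norm_one)
  rw [← sq_le_sq₀ (sum_nonneg fun _ _ => norm_nonneg _) (by positivity), mul_pow,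
    sq_sqrt (Nat.cast_nonneg _)]
  calc (∑ k ∈ s, ‖a k‖) ^ 2 ≤ #s * ∑ k ∈ s, ‖a k‖ ^ 2 := sq_sum_le_card_mul_sum_sq
    _ ≤ #s * B ^ 2 := by gcongr; exact sum_sq_norm_le_sq_of_norm_sum_mul_zpow_le s a h

theorem Real.log_rpow_le_mul_rpow {β ε x : ℝ} (hβ : 0 < β) (hε : 0 < ε) (hx : 1 ≤ x) :
    log x ^ β ≤ (β / ε) ^ β * x ^ ε := by
  have hx0 : 0 ≤ x := by linarith
  calc log x ^ β ≤ (x ^ (ε / β) / (ε / β)) ^ β :=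
        rpow_le_rpow (log_nonneg hx) (log_le_rpow_div hx0 (by positivity)) hβ.le
    _ = (β / ε) ^ β * x ^ ε := by
        rw [div_rpow (by positivity) (by positivity), ← rpow_mul hx0, div_mul_cancel₀ _ hβ.ne',
          div_eq_mul_inv, ← inv_rpow (by positivity), inv_div, mul_comm]

theorem sqrt_mul_rpow_div_log_rpow_le {α' α x : ℝ} (h : α' + 1 / 2 < α) (hx : 1 < x) :
    √x * (x ^ (α' - 1) / log x ^ α') ≤
      ((α - α') / (α - α' - 1 / 2)) ^ (α - α') * (x ^ (α - 1) / log x ^ α) := by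
  have hx0 : 0 < x := by linarith
  have hL : 0 < log x := log_pos hx
  have hlog := log_rpow_le_mul_rpow (by linarith : 0 < α - α') (by linarith : 0 < α - α' - 1 / 2)
    hx.le
  set K := ((α - α') / (α - α' - 1 / 2)) ^ (α - α')
  have hsplit : K * (x ^ (α - 1) / log x ^ α) = K * x ^ (α - α' - 1 / 2) / log x ^ (α - α') *
      (√x * (x ^ (α' - 1) / log x ^ α')) := by
    have hxα : x ^ (α - 1) = x ^ (α' - 1) * x ^ (1 / 2 : ℝ) * x ^ (α - α' - 1 / 2) := by
      rw [← rpow_add hx0, ← rpow_add hx0]; ring_nf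
    have hLα : log x ^ α = log x ^ α' * log x ^ (α - α') := by rw [← rpow_add hL]; ring_nf
    rw [sqrt_eq_rpow, hxα, hLα]
    field_simp
  rw [hsplit]
  exact le_mul_of_one_le_left (by positivity) ((one_le_div (by positivity)).2 hlog)

theorem Aalpha_subset_Malpha_general (α' α : ℝ) (hα'α : α' + 1 / 2 < α) (a : ℤ → ℂ)
    (hA : ∃ C : ℝ, ∀ n : ℕ, 2 ≤ n → ∀ z : ℂ, ‖z‖ = 1 →
      ‖∑ k ∈ Finset.Icc (-(n : ℤ)) n, a k * z ^ k‖ ≤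
        C * (n : ℝ) ^ (α' - 1) / (Real.log n) ^ α') :
    ∃ C' : ℝ, ∀ n : ℕ, 2 ≤ n →
      ∑ k ∈ Finset.Icc (-(n : ℤ)) n, ‖a k‖ ≤
        C' * (n : ℝ) ^ (α - 1) / (Real.log n) ^ α := by
  obtain ⟨C, hC⟩ := hA
  have hC0 : 0 ≤ C := by
    have h2 := (norm_nonneg _).trans (hC 2 le_rfl 1 norm_one)
    rw [mul_div_assoc] at h2
    exact nonneg_of_mul_nonneg_left h2 (by norm_num; positivity)
  refine ⟨√3 * C * ((α - α') / (α - α' - 1 / 2)) ^ (α - α'), fun n hn => ?_⟩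
  have hn' : (2 : ℝ) ≤ n := by exact_mod_cast hn
  have hB : 0 ≤ C * (n : ℝ) ^ (α' - 1) / log n ^ α' := (norm_nonneg _).trans (hC n hn 1 norm_one)
  calc ∑ k ∈ Icc (-(n : ℤ)) n, ‖a k‖
      ≤ √(#(Icc (-(n : ℤ)) n) : ℝ) * (C * n ^ (α' - 1) / log n ^ α') :=
        sum_norm_le_sqrt_card_mul_of_norm_sum_mul_zpow_le _ a (hC n hn)
    _ ≤ √(3 * n) * (C * n ^ (α' - 1) / log n ^ α') := by
        refine mul_le_mul_of_nonneg_right (sqrt_le_sqrt ?_) hB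
        rw [Int.card_Icc, show ((n : ℤ) + 1 - -n).toNat = 2 * n + 1 by omega]
        push_cast
        linarith
    _ = √3 * C * (√n * (n ^ (α' - 1) / log n ^ α')) := by rw [sqrt_mul (by norm_num)]; ring
    _ ≤ √3 * C * (((α - α') / (α - α' - 1 / 2)) ^ (α - α') * (n ^ (α - 1) / log n ^ α)) :=
        mul_le_mul_of_nonneg_left (sqrt_mul_rpow_div_log_rpow_le hα'α (by linarith)) (by positivity)
    _ = _ := by ring

/-- Proposition 2.1: `A_{α'} ⊆ M_α` when `α' + 1/2 < α ≤ 2`. -/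
theorem Aalpha_subset_Malpha (α' α : ℝ) (hα'1 : 1 < α') (hα'α : α' + 1 / 2 < α)
    (hα2 : α ≤ 2) (a : ℤ → ℂ)
    (hA : ∃ C : ℝ, ∀ n : ℕ, 2 ≤ n → ∀ z : ℂ, ‖z‖ = 1 →
      ‖∑ k ∈ Finset.Icc (-(n : ℤ)) n, a k * z ^ k‖ ≤
        C * (n : ℝ) ^ (α' - 1) / (Real.log n) ^ α') :
    ∃ C' : ℝ, ∀ n : ℕ, 2 ≤ n →
      ∑ k ∈ Finset.Icc (-(n : ℤ)) n, ‖a k‖ ≤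
        C' * (n : ℝ) ^ (α - 1) / (Real.log n) ^ α :=
  Aalpha_subset_Malpha_general α' α hα'α a hA
end

section
/- Let (X, μ, T) be an invertible measure-preserving system on a probability space and a : ℤ → ℂ a bounded sequence with ∑_{k=-n}^{n} |a_k| = O(n^(α-1)/(log n)^α) for some 1 < α ≤ 2. Then there is a constant C such that for every f ∈ L¹(μ) and every λ > 0, μ{x : sup_{n≥1} |∑_{1≤|k|≤n} a_k f(T^k x)/k| > λ} ≤ (C/λ)‖f‖₁. -/
/-! The rate condition makes `(a_k / k)` absolutely summable. Writing
`1 / |k| = ∑_{n ≥ |k|} 1 / (n (n + 1))` and exchanging the sums gives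
`∑_{k ≠ 0} |a_k| / |k| ≤ ∑_n A_n / (n (n + 1))`, where
`A_n = ∑_{|k| ≤ n} |a_k| ≤ C n^(α-1) / (log n)^α ≤ C n / (log n)^α`; this is a convergent
Bertrand series since `α > 1`. Every partial sum of the modulated Hilbert transform is then
dominated by `∑_k |a_k / k| |f ∘ T^k|`, whose integral is `(∑_k |a_k / k|) ‖f‖₁` by invariance
of `μ`, and Markov's inequality concludes. -/

open Filter Real Finset MeasureTheory

/-- The `k`-th power (`k ∈ ℤ`) of an invertible transformation `T` with inverse `S`. -/
noncomputable def zpowIter {X : Type*} (T S : X → X) (k : ℤ) : X → X :=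
  fun x => if 0 ≤ k then T^[k.toNat] x else S^[(-k).toNat] x

open scoped ENNReal

theorem summable_inv_mul_log_rpow {α : ℝ} (hα : 1 < α) :
    Summable fun n : ℕ => ((n : ℝ) * Real.log n ^ α)⁻¹ := by
  have hanti : ∀ᶠ n : ℕ in atTop,
      (((n + 1 : ℕ) : ℝ) * Real.log (n + 1 : ℕ) ^ α)⁻¹ ≤ ((n : ℝ) * Real.log n ^ α)⁻¹ := by
    filter_upwards [eventually_ge_atTop 2] with n hn
    have hn' : (2 : ℝ) ≤ n := by exact_mod_cast hn
    have hlog : 0 < Real.log n := Real.log_pos (by linarith)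
    gcongr <;> linarith
  rw [← summable_condensed_iff_of_eventually_nonneg (.of_forall fun n => by positivity) hanti]
  refine ((Real.summable_nat_rpow_inv.mpr hα).mul_left (Real.log 2 ^ α)⁻¹).congr fun k => ?_
  push_cast
  rw [Real.log_pow, Real.mul_rpow (Nat.cast_nonneg k) (Real.log_nonneg one_le_two)]
  field_simp

theorem summable_mul_inv_mul_succ_of_le {u : ℕ → ℝ} (hu : ∀ n, 0 ≤ u n) {α C : ℝ}
    (hα1 : 1 < α) (hα2 : α ≤ 2)
    (hC : ∀ n : ℕ, 2 ≤ n → u n ≤ C * (n : ℝ) ^ (α - 1) / Real.log n ^ α) :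
    Summable fun n : ℕ => u n * ((n : ℝ) * (n + 1))⁻¹ := by
  refine ((summable_inv_mul_log_rpow hα1).mul_left |C|).of_norm_bounded_eventually_nat ?_
  filter_upwards [eventually_ge_atTop 2] with n hn
  have hn' : (2 : ℝ) ≤ n := by exact_mod_cast hn
  have hlog : 0 < Real.log n ^ α := Real.rpow_pos_of_pos (Real.log_pos (by linarith)) α
  have hpow : (n : ℝ) ^ (α - 1) ≤ n := by
    simpa using Real.rpow_le_rpow_of_exponent_le (by linarith : (1 : ℝ) ≤ n)
      (by linarith : α - 1 ≤ 1)
  rw [Real.norm_of_nonneg (mul_nonneg (hu n) (by positivity))]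
  calc u n * ((n : ℝ) * (n + 1))⁻¹
      ≤ C * (n : ℝ) ^ (α - 1) / Real.log n ^ α * ((n : ℝ) * (n + 1))⁻¹ := by gcongr; exact hC n hn
    _ ≤ |C| * n / Real.log n ^ α * ((n : ℝ) * n)⁻¹ := by
        gcongr
        · exact le_abs_self C
        · linarith
    _ = |C| * ((n : ℝ) * Real.log n ^ α)⁻¹ := by field_simp

theorem hasSum_ite_le_inv_mul_succ {m : ℕ} (hm : m ≠ 0) :
    HasSum (fun n : ℕ => if m ≤ n then ((n : ℝ) * (n + 1))⁻¹ else 0) (m : ℝ)⁻¹ := by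
  rw [← hasSum_nat_add_iff' m, Finset.sum_eq_zero fun i hi => if_neg (by simpa using hi), sub_zero]
  have hm' : (0 : ℝ) < m := by positivity
  set g : ℕ → ℝ := fun n => ((n : ℝ) + m)⁻¹
  have hterm : ∀ n : ℕ, (if m ≤ n + m then (((n + m : ℕ) : ℝ) * ((n + m : ℕ) + 1))⁻¹ else 0)
      = g n - g (n + 1) := by
    intro n
    rw [if_pos (Nat.le_add_left m n)]
    simp only [g]
    push_cast
    field_simp
    ring
  simp_rw [hterm]
  rw [hasSum_iff_tendsto_nat_of_nonneg (fun n => sub_nonneg.mpr (by simp only [g]; gcongr; simp)),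
    funext fun N => Finset.sum_range_sub' g N]
  have hg : Tendsto g atTop (nhds 0) :=
    tendsto_inv_atTop_zero.comp (tendsto_atTop_add_const_right _ _ tendsto_natCast_atTop_atTop)
  simpa [g] using hg.const_sub (g 0)

theorem tsum_enorm_div_intCast_le {𝕜 : Type*} [RCLike 𝕜] (a : ℤ → 𝕜) :
    ∑' k : ℤ, ‖a k / k‖ₑ ≤
      ∑' n : ℕ, (∑ k ∈ Icc (-n : ℤ) n, ‖a k‖ₑ) * ENNReal.ofReal ((n : ℝ) * (n + 1))⁻¹ := by
  have hk : ∀ k : ℤ, ‖a k / k‖ₑ ≤ ∑' n : ℕ,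
      if k ∈ Icc (-n : ℤ) n then ‖a k‖ₑ * ENNReal.ofReal ((n : ℝ) * (n + 1))⁻¹ else 0 := by
    intro k
    rcases eq_or_ne k 0 with rfl | hk
    · simp
    have hmem : ∀ n : ℕ, k ∈ Icc (-n : ℤ) n ↔ k.natAbs ≤ n := fun n => by
      simp only [mem_Icc]; omega
    have hkernel := hasSum_ite_le_inv_mul_succ (Int.natAbs_ne_zero.mpr hk)
    simp_rw [hmem, ← mul_ite_zero, ENNReal.tsum_mul_left]
    rw [div_eq_mul_inv, enorm_mul, ← ofReal_norm (k : 𝕜)⁻¹, norm_inv, ← RCLike.ofReal_intCast,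
      RCLike.norm_ofReal, ← Int.cast_abs, ← Nat.cast_natAbs, ← hkernel.tsum_eq,
      ENNReal.ofReal_tsum_of_nonneg (fun n => by positivity) hkernel.summable]
    simp_rw [apply_ite ENNReal.ofReal, ENNReal.ofReal_zero]
    rfl
  calc ∑' k : ℤ, ‖a k / k‖ₑ
      ≤ ∑' (k : ℤ) (n : ℕ),
          if k ∈ Icc (-n : ℤ) n then ‖a k‖ₑ * ENNReal.ofReal ((n : ℝ) * (n + 1))⁻¹ else 0 :=
        ENNReal.tsum_le_tsum hk
    _ = ∑' n : ℕ, (∑ k ∈ Icc (-n : ℤ) n, ‖a k‖ₑ) * ENNReal.ofReal ((n : ℝ) * (n + 1))⁻¹ := by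
        rw [ENNReal.tsum_comm]
        refine tsum_congr fun n => ?_
        rw [tsum_eq_sum fun k hk => if_neg hk, Finset.sum_mul]
        exact Finset.sum_congr rfl fun k hk => if_pos hk

theorem tsum_enorm_div_intCast_ne_top {𝕜 : Type*} [RCLike 𝕜] {a : ℤ → 𝕜} {α C : ℝ}
    (hα1 : 1 < α) (hα2 : α ≤ 2)
    (hC : ∀ n : ℕ, 2 ≤ n → ∑ k ∈ Icc (-n : ℤ) n, ‖a k‖ ≤ C * (n : ℝ) ^ (α - 1) / Real.log n ^ α) :
    ∑' k : ℤ, ‖a k / k‖ₑ ≠ ∞ := by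
  have hA : ∀ n : ℕ, 0 ≤ ∑ k ∈ Icc (-n : ℤ) n, ‖a k‖ := fun n =>
    sum_nonneg fun k _ => norm_nonneg _
  have hsum := summable_mul_inv_mul_succ_of_le hA hα1 hα2 hC
  have hofReal : ∑' n : ℕ, (∑ k ∈ Icc (-n : ℤ) n, ‖a k‖ₑ) * ENNReal.ofReal ((n : ℝ) * (n + 1))⁻¹ =
      ENNReal.ofReal (∑' n : ℕ, (∑ k ∈ Icc (-n : ℤ) n, ‖a k‖) * ((n : ℝ) * (n + 1))⁻¹) := by
    rw [ENNReal.ofReal_tsum_of_nonneg (fun n => mul_nonneg (hA n) (by positivity)) hsum]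
    refine tsum_congr fun n => ?_
    rw [ENNReal.ofReal_mul (hA n), ENNReal.ofReal_sum_of_nonneg fun k _ => norm_nonneg _]
    simp_rw [ofReal_norm]
  exact ne_top_of_le_ne_top (hofReal ▸ ENNReal.ofReal_ne_top) (tsum_enorm_div_intCast_le a)

theorem measurePreserving_zpowIter {X : Type*} [MeasurableSpace X] {μ : Measure X} {T S : X → X}
    (hT : MeasurePreserving T μ μ) (hS : MeasurePreserving S μ μ) (k : ℤ) :
    MeasurePreserving (zpowIter T S k) μ μ := by
  by_cases hk : 0 ≤ k
  · convert hT.iterate k.toNat using 1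
    exact funext fun x => if_pos hk
  · convert hS.iterate (-k).toNat using 1
    exact funext fun x => if_neg hk

theorem lintegral_tsum_mul_comp {ι X Y : Type*} [Countable ι] [MeasurableSpace X]
    [MeasurableSpace Y]
    {μ : Measure X} {ν : Measure Y} {φ : ι → X → Y} (hφ : ∀ i, MeasurePreserving (φ i) μ ν)
    (w : ι → ℝ≥0∞) {g : Y → ℝ≥0∞} (hg : AEMeasurable g ν) :
    ∫⁻ x, ∑' i, w i * g (φ i x) ∂μ = (∑' i, w i) * ∫⁻ y, g y ∂ν := by
  have hcomp : ∀ i, AEMeasurable (fun x => g (φ i x)) μ := fun i =>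
    hg.comp_quasiMeasurePreserving (hφ i).quasiMeasurePreserving
  rw [lintegral_tsum fun i => (hcomp i).const_mul (w i), ← ENNReal.tsum_mul_right]
  refine tsum_congr fun i => ?_
  rw [lintegral_const_mul'' _ (hcomp i), ← (hφ i).map_eq, lintegral_map' ((hφ i).map_eq ▸ hg)
    (hφ i).measurable.aemeasurable]

theorem meas_ge_tsum_mul_enorm_comp_le {ι X Y E : Type*} [Countable ι] [MeasurableSpace X]
    [MeasurableSpace Y] [NormedAddCommGroup E] {μ : Measure X} {ν : Measure Y} {φ : ι → X → Y}
    (hφ : ∀ i, MeasurePreserving (φ i) μ ν) (w : ι → ℝ≥0∞) {f : Y → E}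
    (hf : AEStronglyMeasurable f ν) {ε : ℝ≥0∞} (hε : ε ≠ 0) (hε' : ε ≠ ∞) :
    μ {x | ε ≤ ∑' i, w i * ‖f (φ i x)‖ₑ} ≤ (∑' i, w i) * (∫⁻ y, ‖f y‖ₑ ∂ν) / ε := by
  have hmeas : AEMeasurable (fun x => ∑' i, w i * ‖f (φ i x)‖ₑ) μ := AEMeasurable.tsum fun i =>
    (hf.comp_measurePreserving (hφ i)).enorm.const_mul (w i)
  rw [← lintegral_tsum_mul_comp hφ w hf.enorm]
  exact meas_ge_le_lintegral_div hmeas hε hε'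

theorem Malpha_weak_one_one_general {X : Type*} [MeasurableSpace X] (μ : Measure X)
    (T S : X → X)
    (hT : MeasurePreserving T μ μ) (hS : MeasurePreserving S μ μ)
    (α : ℝ) (hα1 : 1 < α) (hα2 : α ≤ 2) (a : ℤ → ℂ)
    (hM : ∃ C : ℝ, ∀ n : ℕ, 2 ≤ n →
      ∑ k ∈ Finset.Icc (-(n : ℤ)) n, ‖a k‖ ≤ C * (n : ℝ) ^ (α - 1) / (Real.log n) ^ α) :
    ∃ C : ℝ, ∀ f : X → ℂ, Integrable f μ → ∀ lam : ℝ, 0 < lam →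
      μ {x : X | ∃ n : ℕ, 1 ≤ n ∧
          lam < ‖∑ k ∈ (Finset.Icc (-(n : ℤ)) n).erase 0,
            a k * f (zpowIter T S k x) / (k : ℂ)‖} ≤
        ENNReal.ofReal ((C / lam) * ∫ x, ‖f x‖ ∂μ) := by
  obtain ⟨C, hC⟩ := hM
  set w : ℤ → ℝ≥0∞ := fun k => ‖a k / k‖ₑ
  have hw : ∑' k, w k ≠ ∞ := tsum_enorm_div_intCast_ne_top hα1 hα2 hC
  refine ⟨(∑' k, w k).toReal, fun f hf lam hlam => ?_⟩
  refine le_trans (measure_mono (t := {x | ENNReal.ofReal lam ≤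
    ∑' k, w k * ‖f (zpowIter T S k x)‖ₑ}) ?_) ?_
  · rintro x ⟨n, -, hlt⟩
    calc ENNReal.ofReal lam
        ≤ ‖∑ k ∈ (Icc (-(n : ℤ)) n).erase 0, a k * f (zpowIter T S k x) / (k : ℂ)‖ₑ := by
          rw [← ofReal_norm]; exact ENNReal.ofReal_le_ofReal hlt.le
      _ ≤ ∑ k ∈ (Icc (-(n : ℤ)) n).erase 0, ‖a k * f (zpowIter T S k x) / (k : ℂ)‖ₑ :=
          enorm_sum_le _ _
      _ = ∑ k ∈ (Icc (-(n : ℤ)) n).erase 0, w k * ‖f (zpowIter T S k x)‖ₑ :=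
          sum_congr rfl fun k _ => by rw [mul_div_right_comm, enorm_mul]
      _ ≤ ∑' k, w k * ‖f (zpowIter T S k x)‖ₑ := ENNReal.sum_le_tsum _
  refine (meas_ge_tsum_mul_enorm_comp_le (measurePreserving_zpowIter hT hS) w
    hf.aestronglyMeasurable (by simpa using hlam) ENNReal.ofReal_ne_top).trans_eq ?_
  rw [div_mul_eq_mul_div, ENNReal.ofReal_div_of_pos hlam, ENNReal.ofReal_mul ENNReal.toReal_nonneg,
    ENNReal.ofReal_toReal hw, ofReal_integral_norm_eq_lintegral_enorm hf]

/-- Theorem 2.2 (weak (1,1) maximal inequality): for a bounded sequence `a` with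
`∑_{|k|≤n}|a_k| = O(n^(α-1)/(log n)^α)`, `1 < α ≤ 2`, there is a constant `C`
such that for all `f ∈ L¹` and `λ > 0`,
`μ{x : sup_{n≥1} |∑_{1≤|k|≤n} a_k f(T^k x)/k| > λ} ≤ (C/λ)‖f‖₁`. -/
theorem Malpha_weak_one_one {X : Type*} [MeasurableSpace X] (μ : Measure X)
    [IsProbabilityMeasure μ] (T S : X → X)
    (hTS : Function.LeftInverse S T ∧ Function.RightInverse S T)
    (hT : MeasurePreserving T μ μ) (hS : MeasurePreserving S μ μ)
    (α : ℝ) (hα1 : 1 < α) (hα2 : α ≤ 2) (a : ℤ → ℂ)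
    (hbdd : ∃ B : ℝ, ∀ k : ℤ, ‖a k‖ ≤ B)
    (hM : ∃ C : ℝ, ∀ n : ℕ, 2 ≤ n →
      ∑ k ∈ Finset.Icc (-(n : ℤ)) n, ‖a k‖ ≤ C * (n : ℝ) ^ (α - 1) / (Real.log n) ^ α) :
    ∃ C : ℝ, ∀ f : X → ℂ, Integrable f μ → ∀ lam : ℝ, 0 < lam →
      μ {x : X | ∃ n : ℕ, 1 ≤ n ∧
          lam < ‖∑ k ∈ (Finset.Icc (-(n : ℤ)) n).erase 0,
            a k * f (zpowIter T S k x) / (k : ℂ)‖} ≤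
        ENNReal.ofReal ((C / lam) * ∫ x, ‖f x‖ ∂μ) :=
  Malpha_weak_one_one_general μ T S hT hS α hα1 hα2 a hM
end

section
/- Let h : ℕ → ℝ be a function with lim_{n→∞} h(n) = 0 and M = 2·sup_n max(h(n), 0) < ∞. Then there exists a strictly decreasing, convex, piecewise-linear function a : [0, ∞) → (0, ∞) with a(0) = M, lim_{x→∞} a(x) = 0, and a(n) > h(n) for every n ∈ ℕ, whose breakpoints n_0 = 0 < n_1 < n_2 < … are integers satisfying n_{k+1} ≥ 2n_k + 3 and n_{k+1} ≤ 2(n_{k+1} − n_k) for all k. -/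
open Filter Set

/-- Construction of the modulating majorant: given `h → 0` and
`M = 2 sup_n max(h n, 0) > 0`, there is a strictly decreasing, convex,
piecewise-linear `a : [0,∞) → (0,∞)` with `a 0 = M`, `a → 0`, `a n > h n`,
whose integer breakpoints `n_0 = 0 < n_1 < …` satisfy `n_{k+1} ≥ 2 n_k + 3`
and `n_{k+1} ≤ 2 (n_{k+1} − n_k)`. -/
theorem exists_piecewise_linear_majorant (h : ℕ → ℝ)
    (hlim : Tendsto h atTop (nhds 0)) (M : ℝ)
    (hM : M = 2 * ⨆ n : ℕ, max (h n) 0) (hMpos : 0 < M) :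
    ∃ (nseq : ℕ → ℕ) (a : ℝ → ℝ),
      nseq 0 = 0 ∧ StrictMono nseq ∧
      (∀ k : ℕ, 2 * nseq k + 3 ≤ nseq (k + 1)) ∧
      (∀ k : ℕ, nseq (k + 1) ≤ 2 * (nseq (k + 1) - nseq k)) ∧
      a 0 = M ∧ Tendsto a atTop (nhds 0) ∧
      (∀ x : ℝ, 0 ≤ x → 0 < a x) ∧
      StrictAntiOn a (Set.Ici 0) ∧
      ConvexOn ℝ (Set.Ici 0) a ∧
      (∀ n : ℕ, h n < a n) ∧
      (∀ k : ℕ, ∃ c d : ℝ, ∀ x ∈ Set.Icc (nseq k : ℝ) (nseq (k + 1)), a x = c * x + d) := by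
  classical
  -- `h n ≤ M / 2` for all `n`
  have hbdd0 : BddAbove (Set.range fun n => max (h n) 0) :=
    (hlim.max tendsto_const_nhds).bddAbove_range
  have hhalf : ∀ n, h n ≤ M / 2 := by
    intro n
    have h1 : max (h n) 0 ≤ ⨆ n : ℕ, max (h n) 0 := le_ciSup hbdd0 n
    have h2 : h n ≤ max (h n) 0 := le_max_left _ _
    rw [hM]; linarith
  -- thresholds
  have hthresh : ∀ k : ℕ, ∃ N : ℕ, ∀ n ≥ N, h n < M / 2 ^ (k + 1) := by
    intro k
    have hpos : (0 : ℝ) < M / 2 ^ (k + 1) := by positivity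
    exact eventually_atTop.1 (hlim.eventually_lt_const hpos)
  choose N hN using hthresh
  -- the breakpoints
  obtain ⟨nseq, hnseq⟩ :
      ∃ nseq : ℕ → ℕ, nseq = fun k => Nat.rec 0 (fun k ih => max (2 * ih + 3) (N (k + 1))) k :=
    ⟨_, rfl⟩
  have nseq0 : nseq 0 = 0 := by rw [hnseq]; rfl
  have nseqS : ∀ k, nseq (k + 1) = max (2 * nseq k + 3) (N (k + 1)) := by
    intro k; rw [hnseq]
  have hgrow : ∀ k, 2 * nseq k + 3 ≤ nseq (k + 1) := by
    intro k; rw [nseqS]; exact le_max_left _ _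
  have hNle : ∀ k, N (k + 1) ≤ nseq (k + 1) := by
    intro k; rw [nseqS]; exact le_max_right _ _
  have hlt : ∀ k, nseq k < nseq (k + 1) := by intro k; have := hgrow k; omega
  have hmono : StrictMono nseq := strictMono_nat_of_lt_succ hlt
  have hle2 : ∀ k, nseq (k + 1) ≤ 2 * (nseq (k + 1) - nseq k) := by
    intro k; have := hgrow k; omega
  have hk_le : ∀ k, k ≤ nseq k := fun k => hmono.le_apply
  -- slopes and affine pieces
  obtain ⟨c, hc⟩ :
      ∃ c : ℕ → ℝ, c = fun k => -(M / 2 ^ (k + 1)) / ((nseq (k + 1) : ℝ) - nseq k) :=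
    ⟨_, rfl⟩
  obtain ⟨L, hL⟩ :
      ∃ L : ℕ → ℝ → ℝ, L = fun k x => c k * (x - (nseq (k + 1) : ℝ)) + M / 2 ^ (k + 1) :=
    ⟨_, rfl⟩
  have hΔpos : ∀ k, (0 : ℝ) < (nseq (k + 1) : ℝ) - nseq k := by
    intro k; have : (nseq k : ℝ) < nseq (k + 1) := by exact_mod_cast hlt k
    linarith
  have hcneg : ∀ k, c k < 0 := by
    intro k
    have hA : (0 : ℝ) < M / 2 ^ (k + 1) := by positivity
    rw [hc]
    exact div_neg_of_neg_of_pos (by linarith) (hΔpos k)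
  have hcΔ : ∀ k, c k * ((nseq (k + 1) : ℝ) - nseq k) = -(M / 2 ^ (k + 1)) := by
    intro k; rw [hc]; exact div_mul_cancel₀ _ (hΔpos k).ne'
  have hhalfpow : ∀ k : ℕ, M / 2 ^ (k + 1) + M / 2 ^ (k + 1) = M / 2 ^ k := by
    intro k
    rw [pow_succ]
    have : (2 : ℝ) ^ k ≠ 0 := by positivity
    field_simp
    ring
  have hLleft : ∀ k, L k (nseq k) = M / 2 ^ k := by
    intro k
    have h1 := hcΔ k
    have h2 := hhalfpow k
    simp only [hL]
    nlinarith [h1, h2]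
  -- slopes are monotone
  have hΔle : ∀ k, (nseq (k + 1) : ℝ) - nseq k ≤ (nseq (k + 1 + 1) : ℝ) - nseq (k + 1) := by
    intro k
    have h3 : (2 * nseq (k + 1) + 3 : ℝ) ≤ nseq (k + 1 + 1) := by exact_mod_cast hgrow (k + 1)
    have h0 : (0 : ℝ) ≤ (nseq k : ℝ) := Nat.cast_nonneg _
    linarith
  have hcmono : ∀ k, c k ≤ c (k + 1) := by
    intro k
    have h1 := hΔpos k
    have h2 := hΔpos (k + 1)
    have hA : (0 : ℝ) < M / 2 ^ (k + 1) := by positivity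
    have hA2 : M / 2 ^ (k + 1 + 1) = M / 2 ^ (k + 1) / 2 := by rw [pow_succ]; ring
    simp only [hc]
    rw [hA2, neg_div, neg_div, neg_le_neg_iff, div_le_div_iff₀ h2 h1]
    nlinarith [hΔle k, mul_le_mul_of_nonneg_left (hΔle k) hA.le, mul_pos hA h1]
  -- alternative form of `L (k+1)` anchored at `nseq (k+1)`
  have hLalt : ∀ k x, L (k + 1) x = c (k + 1) * (x - (nseq (k + 1) : ℝ)) + M / 2 ^ (k + 1) := by
    intro k x
    have h1 := hcΔ (k + 1)
    have h2 := hhalfpow (k + 1)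
    simp only [hL]
    nlinarith [h1, h2]
  have hadj_up : ∀ k x, (nseq (k + 1) : ℝ) ≤ x → L k x ≤ L (k + 1) x := by
    intro k x hx
    rw [hLalt]
    simp only [hL]
    nlinarith [mul_nonneg (sub_nonneg.2 (hcmono k)) (sub_nonneg.2 hx)]
  have hadj_down : ∀ k x, x ≤ (nseq (k + 1) : ℝ) → L (k + 1) x ≤ L k x := by
    intro k x hx
    rw [hLalt]
    simp only [hL]
    nlinarith [mul_nonneg (sub_nonneg.2 (hcmono k)) (sub_nonneg.2 hx)]
  -- chains
  have hup : ∀ j k, j ≤ k → ∀ x, (nseq k : ℝ) ≤ x → L j x ≤ L k x := by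
    intro j k hjk
    induction k with
    | zero =>
      have : j = 0 := by omega
      subst this; exact fun x _ => le_rfl
    | succ k ih =>
      intro x hx
      by_cases hj : j = k + 1
      · subst hj; exact le_rfl
      · have hjk' : j ≤ k := by omega
        have hmk : (nseq k : ℝ) ≤ nseq (k + 1) := by exact_mod_cast (hlt k).le
        exact (ih hjk' x (hmk.trans hx)).trans (hadj_up k x hx)
  have hdown : ∀ k j, k ≤ j → ∀ x, x ≤ (nseq (k + 1) : ℝ) → L j x ≤ L k x := by
    intro k j hkj
    induction j with
    | zero =>
      have : k = 0 := by omega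
      subst this; exact fun x _ => le_rfl
    | succ j ih =>
      intro x hx
      by_cases hj : k = j + 1
      · subst hj; exact le_rfl
      · have hkj' : k ≤ j := by omega
        have hmk' : nseq (k + 1) ≤ nseq (j + 1) := hmono.le_iff_le.mpr (by omega)
        have hmk : (nseq (k + 1) : ℝ) ≤ nseq (j + 1) := by exact_mod_cast hmk'
        exact (hadj_down j x (hx.trans hmk)).trans (ih hkj' x hx)
  have Hpiece : ∀ k x, (nseq k : ℝ) ≤ x → x ≤ (nseq (k + 1) : ℝ) → ∀ j, L j x ≤ L k x := by
    intro k x h1 h2 j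
    rcases le_total j k with hjk | hjk
    · exact hup j k hjk x h1
    · exact hdown k j hjk x h2
  -- boundedness of the family at each `x ≥ 0`
  have Hbdd : ∀ x : ℝ, 0 ≤ x → BddAbove (Set.range fun k => L k x) := by
    intro x hx
    refine ⟨2 * M, ?_⟩
    rintro _ ⟨k, rfl⟩
    have hA : (0 : ℝ) < M / 2 ^ (k + 1) := by positivity
    have hA2 : M / 2 ^ (k + 1) ≤ M / 2 := by
      apply div_le_div_of_nonneg_left hMpos.le two_pos
      calc (2 : ℝ) = 2 ^ 1 := (pow_one 2).symm
      _ ≤ 2 ^ (k + 1) := pow_le_pow_right₀ one_le_two (by omega)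
    have hn2 : (nseq (k + 1) : ℝ) ≤ 2 * ((nseq (k + 1) : ℝ) - nseq k) := by
      have h3 : (2 * nseq k + 3 : ℝ) ≤ nseq (k + 1) := by exact_mod_cast hgrow k
      linarith
    have hck := hcneg k
    have h1 : -c k * (nseq (k + 1) : ℝ) ≤ -c k * (2 * ((nseq (k + 1) : ℝ) - nseq k)) :=
      mul_le_mul_of_nonneg_left hn2 (by linarith)
    have h2 : -c k * (2 * ((nseq (k + 1) : ℝ) - nseq k)) = 2 * (M / 2 ^ (k + 1)) := by
      linear_combination (-2 : ℝ) * hcΔ k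
    have h3 : c k * x ≤ 0 := mul_nonpos_of_nonpos_of_nonneg hck.le hx
    simp only [hL]
    nlinarith [h1, h2, h3]
  -- locating a point in a piece
  have hfind : ∀ x : ℝ, 0 ≤ x → ∃ k, (nseq k : ℝ) ≤ x ∧ x < (nseq (k + 1) : ℝ) := by
    intro x hx
    obtain ⟨m, hm⟩ := exists_nat_gt x
    have hP : ∃ k, x < (nseq k : ℝ) := by
      refine ⟨m, hm.trans_le ?_⟩
      exact_mod_cast hk_le m
    obtain hk := Nat.find_spec hP
    have hkpos : Nat.find hP ≠ 0 := by
      intro h0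
      rw [h0, nseq0] at hk
      push_cast at hk
      linarith
    obtain ⟨k', hk'⟩ := Nat.exists_eq_succ_of_ne_zero hkpos
    have hk2 : x < (nseq (k' + 1) : ℝ) := by rw [hk'] at hk; exact hk
    refine ⟨k', ?_, hk2⟩
    have := Nat.find_min hP (m := k') (by omega)
    push_neg at this
    exact this
  obtain ⟨a, hadef⟩ : ∃ a : ℝ → ℝ, a = fun x => ⨆ k, L k x := ⟨_, rfl⟩
  have haval : ∀ k x, (nseq k : ℝ) ≤ x → x ≤ (nseq (k + 1) : ℝ) → a x = L k x := by
    intro k x h1 h2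
    have hx0 : (0 : ℝ) ≤ x := le_trans (Nat.cast_nonneg _) h1
    rw [hadef]
    exact le_antisymm (ciSup_le fun j => Hpiece k x h1 h2 j) (le_ciSup (Hbdd x hx0) k)
  -- `L k x ≤ M / 2 ^ k` when `nseq k ≤ x`
  have hLle : ∀ k x, (nseq k : ℝ) ≤ x → L k x ≤ M / 2 ^ k := by
    intro k x hx
    have h1 : L k x ≤ L k (nseq k) := by
      simp only [hL]
      nlinarith [mul_nonpos_of_nonpos_of_nonneg (hcneg k).le (sub_nonneg.2 hx)]
    rw [hLleft k] at h1
    exact h1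
  -- `M / 2 ^ (k+1) < L k x` when `x < nseq (k+1)`, and `≤` if `x ≤ nseq (k+1)`
  have hLge : ∀ k x, x < (nseq (k + 1) : ℝ) → M / 2 ^ (k + 1) < L k x := by
    intro k x hx
    simp only [hL]
    nlinarith [mul_pos_of_neg_of_neg (hcneg k) (sub_neg.2 hx)]
  have hLge' : ∀ k x, x ≤ (nseq (k + 1) : ℝ) → M / 2 ^ (k + 1) ≤ L k x := by
    intro k x hx
    simp only [hL]
    nlinarith [mul_nonneg (neg_nonneg.2 (hcneg k).le) (sub_nonneg.2 hx)]
  refine ⟨nseq, a, nseq0, hmono, hgrow, hle2, ?_, ?_, ?_, ?_, ?_, ?_, ?_⟩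
  · -- a 0 = M
    have h0 : (nseq 0 : ℝ) ≤ 0 := by rw [nseq0]; norm_num
    rw [haval 0 0 h0 (Nat.cast_nonneg _)]
    have h2 := hcΔ 0
    rw [nseq0] at h2
    simp only [hL]
    push_cast at h2 ⊢
    norm_num at h2 ⊢
    linarith [h2]
  · -- Tendsto a atTop (nhds 0)
    rw [Metric.tendsto_atTop]
    intro ε hε
    obtain ⟨m, hm⟩ := pow_unbounded_of_one_lt (M / ε) (one_lt_two (α := ℝ))
    have hmε : M / 2 ^ m < ε := by
      rw [div_lt_iff₀ (by positivity)] at hm ⊢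
      nlinarith [pow_pos (two_pos (α := ℝ)) m]
    refine ⟨(nseq m : ℝ), fun x hx => ?_⟩
    have hx0 : (0 : ℝ) ≤ x := le_trans (Nat.cast_nonneg _) hx
    obtain ⟨k, hk1, hk2⟩ := hfind x hx0
    have hax : a x = L k x := haval k x hk1 hk2.le
    have hmk : m ≤ k := by
      have h1 : (nseq m : ℝ) < nseq (k + 1) := lt_of_le_of_lt hx hk2
      have h2 : nseq m < nseq (k + 1) := by exact_mod_cast h1
      rw [hmono.lt_iff_lt] at h2
      omega
    have hposx : 0 < L k x := lt_of_lt_of_le (show (0:ℝ) < M / 2 ^ (k+1) by positivity) (hLge' k x hk2.le)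
    have hle1 : L k x ≤ M / 2 ^ k := hLle k x hk1
    have hle2' : M / 2 ^ k ≤ M / 2 ^ m :=
      div_le_div_of_nonneg_left hMpos.le (pow_pos two_pos m)
        (pow_le_pow_right₀ one_le_two hmk)
    rw [hax, Real.dist_eq, sub_zero, abs_of_pos hposx]
    linarith
  · -- positivity
    intro x hx
    obtain ⟨k, hk1, hk2⟩ := hfind x hx
    rw [haval k x hk1 hk2.le]
    exact lt_of_lt_of_le (show (0:ℝ) < M / 2 ^ (k+1) by positivity) (hLge' k x hk2.le)
  · -- StrictAntiOn
    intro x hx y hy hxy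
    simp only [Set.mem_Ici] at hx hy
    obtain ⟨k, hk1, hk2⟩ := hfind x hx
    rw [haval k x hk1 hk2.le]
    rcases le_or_gt y (nseq (k + 1) : ℝ) with hcase | hcase
    · rw [haval k y (hk1.trans hxy.le) hcase]
      simp only [hL]
      nlinarith [mul_neg_of_neg_of_pos (hcneg k) (sub_pos.2 hxy)]
    · obtain ⟨m, hm1, hm2⟩ := hfind y hy
      rw [haval m y hm1 hm2.le]
      have hkm : k + 1 ≤ m := by
        have h1 : (nseq (k + 1) : ℝ) < nseq (m + 1) := hcase.trans hm2
        have h2 : nseq (k + 1) < nseq (m + 1) := by exact_mod_cast h1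
        rw [hmono.lt_iff_lt] at h2
        omega
      have h1 : L m y ≤ M / 2 ^ m := hLle m y hm1
      have h2 : M / 2 ^ m ≤ M / 2 ^ (k + 1) :=
        div_le_div_of_nonneg_left hMpos.le (pow_pos two_pos (k + 1))
          (pow_le_pow_right₀ one_le_two hkm)
      have h3 : M / 2 ^ (k + 1) < L k x := hLge k x hk2
      linarith
  · -- convexity
    refine ⟨convex_Ici 0, ?_⟩
    intro x hx y hy t s ht hs hts
    simp only [Set.mem_Ici] at hx hy
    simp only [smul_eq_mul, hadef]
    refine ciSup_le fun k => ?_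
    have h1 : L k x ≤ ⨆ j, L j x := le_ciSup (Hbdd x hx) k
    have h2 : L k y ≤ ⨆ j, L j y := le_ciSup (Hbdd y hy) k
    have h3 : L k (t * x + s * y) = t * L k x + s * L k y := by
      simp only [hL]
      linear_combination (c k * (nseq (k + 1) : ℝ) - M / 2 ^ (k + 1)) * hts
    rw [h3]
    exact add_le_add (mul_le_mul_of_nonneg_left h1 ht) (mul_le_mul_of_nonneg_left h2 hs)
  · -- majorant
    intro n
    have hn0 : (0 : ℝ) ≤ (n : ℝ) := Nat.cast_nonneg n
    obtain ⟨k, hk1, hk2⟩ := hfind n hn0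
    rw [haval k n hk1 hk2.le]
    have hstrict : M / 2 ^ (k + 1) < L k n := hLge k n hk2
    have hhn : h n ≤ M / 2 ^ (k + 1) := by
      cases k with
      | zero => simpa using hhalf n
      | succ k' =>
        have hnn : N (k' + 1) ≤ n := by
          have h1 : nseq (k' + 1) ≤ n := by exact_mod_cast hk1
          exact le_trans (hNle k') h1
        exact (hN (k' + 1) n hnn).le
    linarith
  · -- piecewise affine
    intro k
    refine ⟨c k, M / 2 ^ (k + 1) - c k * (nseq (k + 1) : ℝ), fun x hx => ?_⟩
    rw [haval k x hx.1 hx.2]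
    simp only [hL]
    ring
end

section
/- Call a : ℤ → ℂ a Hilbert sequence if lim_n ∑_{1≤|k|≤n} a_k/k exists. Suppose a^r (r ∈ ℕ) are Hilbert sequences and a : ℤ → ℂ satisfies limsup_n (log n)^α/n^(α-1) · ∑_{k=-n}^{n} |a^r_k − a_k| → 0 as r → ∞, for some 1 < α ≤ 2. Then a is a Hilbert sequence. -/
open Filter Real Finset

/-- `a` is a Hilbert sequence if its symmetric partial sums `∑_{1≤|k|≤n} a_k/k`
converge. -/
def IsHilbertSeq (a : ℤ → ℂ) : Prop :=
  ∃ L : ℂ, Tendsto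
    (fun n : ℕ => ∑ k ∈ (Finset.Icc (-(n : ℤ)) n).erase 0, a k / (k : ℂ)) atTop (nhds L)

/-- The seminorm `‖b‖_α = limsup_n (log n)^α/n^(α-1) ∑_{|k|≤n} |b_k|`
(valued in `ℝ≥0∞`). -/
noncomputable def alphaSeminorm (α : ℝ) (b : ℤ → ℂ) : ENNReal :=
  Filter.limsup (fun n : ℕ => ENNReal.ofReal
    ((Real.log n) ^ α / (n : ℝ) ^ (α - 1) * ∑ k ∈ Finset.Icc (-(n : ℤ)) n, ‖b k‖)) atTop

/-!
Write `b = a^r - a`. Splitting `∑_{1≤|k|≤n} b_k/k` into `∑_{j ≤ n} (b_j - b_{-j})/j` and summing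
by parts against the partial sums `S_j = ∑_{i ≤ j} (b_i - b_{-i})` bounds its tails by
`sup |S_j|/j` plus `∑ |S_j|/j²`. A small seminorm gives `|S_j| ≤ δ j / (log j)^α` for large `j`
(here `α ≤ 2` is used), and `∑ 1/(j (log j)^α)` converges since `α > 1`, so the tails of the
Hilbert sums of `b` oscillate by `O(δ)`. Since the Hilbert sums of each `a^r` are Cauchy, so are
those of `a`.
-/

theorem cauchySeq_of_forall_exists_cauchySeq_near {E : Type*} [SeminormedAddCommGroup E]
    {u : ℕ → E}
    (h : ∀ ε > 0, ∃ v : ℕ → E, CauchySeq v ∧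
      ∃ N, ∀ m n, N ≤ m → m ≤ n → ‖(v n - u n) - (v m - u m)‖ ≤ ε) :
    CauchySeq u := by
  refine Metric.cauchySeq_iff'.2 fun ε hε => ?_
  obtain ⟨v, hv, N₀, hN₀⟩ := h (ε / 2) (half_pos hε)
  obtain ⟨N₁, hN₁⟩ := Metric.cauchySeq_iff.1 hv (ε / 2) (half_pos hε)
  set N := max N₀ N₁
  refine ⟨N, fun n hn => ?_⟩
  have hv_near : ‖v n - v N‖ < ε / 2 := by
    rw [← dist_eq_norm]; exact hN₁ n (le_of_max_le_right hn) N (le_max_right _ _)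
  have hdiff := hN₀ N n (le_max_left _ _) hn
  calc dist (u n) (u N) = ‖(v n - v N) - ((v n - u n) - (v N - u N))‖ := by
        rw [dist_eq_norm]; congr 1; abel
    _ ≤ ‖v n - v N‖ + ‖(v n - u n) - (v N - u N)‖ := norm_sub_le _ _
    _ < ε := by linarith

theorem sum_Icc_neg_erase_zero {M : Type*} [AddCommMonoid M] (f : ℤ → M) (n : ℕ) :
    ∑ k ∈ (Icc (-(n : ℤ)) n).erase 0, f k = ∑ j ∈ Ioc 0 n, (f j + f (-(j : ℤ))) := by
  induction n with
  | zero => simp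
  | succ n ih =>
    have hset : (Icc (-((n + 1 : ℕ) : ℤ)) (n + 1 : ℕ)).erase 0 =
        insert ((n + 1 : ℕ) : ℤ) (insert (-((n + 1 : ℕ) : ℤ)) ((Icc (-(n : ℤ)) n).erase 0)) := by
      ext k; simp only [mem_erase, mem_Icc, mem_insert]; omega
    rw [hset, sum_insert (by simp; omega), sum_insert (by simp), ih,
      sum_Ioc_succ_top (Nat.zero_le n)]
    abel

section Abel

variable {𝕜 : Type*} [RCLike 𝕜]

-- Dividing the boundary terms by `n + 1` rather than `n` makes the identity hold for all `m ≤ n`.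
theorem sum_Ioc_div_natCast_eq (c : ℕ → 𝕜) {m n : ℕ} (hmn : m ≤ n) :
    ∑ j ∈ Ioc m n, c j / j =
      (∑ i ∈ Ioc 0 n, c i) / (n + 1) - (∑ i ∈ Ioc 0 m, c i) / (m + 1) +
        ∑ j ∈ Ioc m n, (∑ i ∈ Ioc 0 j, c i) / (j * (j + 1)) := by
  induction n, hmn using Nat.le_induction with
  | base => simp
  | succ n hmn ih =>
    rw [sum_Ioc_succ_top hmn, sum_Ioc_succ_top hmn, ih, sum_Ioc_succ_top (Nat.zero_le n)]
    have h₁ : (n + 1 : 𝕜) ≠ 0 := by exact_mod_cast n.succ_ne_zero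
    have h₂ : (n + 1 + 1 : 𝕜) ≠ 0 := by exact_mod_cast (n + 1).succ_ne_zero
    push_cast
    field_simp
    ring

theorem norm_sum_Ioc_div_natCast_le (c : ℕ → 𝕜) (ψ : ℕ → ℝ) {m n : ℕ} (hmn : m ≤ n)
    (hS : ∀ j ∈ Icc m n, ‖∑ i ∈ Ioc 0 j, c i‖ ≤ (j + 1) * ψ j) :
    ‖∑ j ∈ Ioc m n, c j / j‖ ≤ ψ n + ψ m + ∑ j ∈ Ioc m n, ψ j / j := by
  have hcast (j : ℕ) : ‖(j + 1 : 𝕜)‖ = j + 1 := by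
    exact_mod_cast RCLike.norm_natCast (K := 𝕜) (j + 1)
  have hboundary (j : ℕ) (hj : j ∈ Icc m n) : ‖(∑ i ∈ Ioc 0 j, c i) / (j + 1)‖ ≤ ψ j := by
    rw [norm_div, hcast, div_le_iff₀ (by positivity), mul_comm]
    exact hS j hj
  have hinterior (j : ℕ) (hj : j ∈ Ioc m n) :
      ‖(∑ i ∈ Ioc 0 j, c i) / (j * (j + 1))‖ ≤ ψ j / j := by
    rw [div_mul_eq_div_div_swap, norm_div, RCLike.norm_natCast]
    exact div_le_div_of_nonneg_right (hboundary j (Ioc_subset_Icc_self hj)) (Nat.cast_nonneg j)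
  rw [sum_Ioc_div_natCast_eq c hmn]
  refine (norm_add_le _ _).trans (add_le_add ((norm_sub_le _ _).trans (add_le_add ?_ ?_)) ?_)
  · exact hboundary n (right_mem_Icc.2 hmn)
  · exact hboundary m (left_mem_Icc.2 hmn)
  · exact (norm_sum_le _ _).trans (sum_le_sum hinterior)

end Abel

theorem one_div_nat_mul_log_rpow_nonneg (α : ℝ) (n : ℕ) : 0 ≤ 1 / ((n : ℝ) * log n ^ α) := by
  have := log_natCast_nonneg n
  positivity

theorem summable_one_div_nat_mul_log_rpow {α : ℝ} (hα : 1 < α) :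
    Summable fun n : ℕ => 1 / (n * log n ^ α) := by
  rw [← summable_condensed_iff_of_eventually_nonneg
    (Eventually.of_forall (one_div_nat_mul_log_rpow_nonneg α))]
  · -- at `k = 0` both sides are `1 / 0 = 0`
    have hcondensed (k : ℕ) : (2 : ℝ) ^ k * (1 / (((2 ^ k : ℕ) : ℝ) * log ((2 ^ k : ℕ) : ℝ) ^ α)) =
        (log 2 ^ α)⁻¹ * (1 / (k : ℝ) ^ α) := by
      rw [Nat.cast_pow, Nat.cast_ofNat, log_pow,
        mul_rpow (Nat.cast_nonneg k) (log_nonneg one_le_two)]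
      field_simp
    simp_rw [hcondensed]
    exact (summable_one_div_nat_rpow.2 hα).mul_left _
  · filter_upwards [eventually_ge_atTop 2] with n hn
    have h₁ : (1 : ℝ) < n := by exact_mod_cast hn
    have : 0 < log n := log_pos h₁
    gcongr <;> linarith

noncomputable def hilbertPartialSum (b : ℤ → ℂ) (n : ℕ) : ℂ :=
  ∑ k ∈ (Icc (-(n : ℤ)) n).erase 0, b k / k

theorem hilbertPartialSum_sub (f g : ℤ → ℂ) (n : ℕ) :
    hilbertPartialSum (fun k => f k - g k) n = hilbertPartialSum f n - hilbertPartialSum g n := by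
  simp only [hilbertPartialSum, sub_div, sum_sub_distrib]

theorem hilbertPartialSum_eq_sum_Ioc (b : ℤ → ℂ) (n : ℕ) :
    hilbertPartialSum b n = ∑ j ∈ Ioc 0 n, (b j - b (-(j : ℤ))) / j := by
  rw [hilbertPartialSum, sum_Icc_neg_erase_zero]
  refine sum_congr rfl fun _ _ => ?_
  push_cast
  ring

theorem norm_sum_Ioc_sub_neg_le (b : ℤ → ℂ) (n : ℕ) :
    ‖∑ j ∈ Ioc 0 n, (b j - b (-(j : ℤ)))‖ ≤ ∑ k ∈ Icc (-(n : ℤ)) n, ‖b k‖ :=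
  calc ‖∑ j ∈ Ioc 0 n, (b j - b (-(j : ℤ)))‖
      ≤ ∑ j ∈ Ioc 0 n, (‖b j‖ + ‖b (-(j : ℤ))‖) :=
        (norm_sum_le _ _).trans (sum_le_sum fun _ _ => norm_sub_le _ _)
    _ = ∑ k ∈ (Icc (-(n : ℤ)) n).erase 0, ‖b k‖ :=
        (sum_Icc_neg_erase_zero (fun k => ‖b k‖) n).symm
    _ ≤ ∑ k ∈ Icc (-(n : ℤ)) n, ‖b k‖ := sum_le_sum_of_subset_of_nonneg (erase_subset _ _)
        fun _ _ _ => norm_nonneg _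

theorem eventually_sum_norm_le_of_alphaSeminorm_lt {α δ : ℝ} (hα : α ≤ 2) {b : ℤ → ℂ}
    (hb : alphaSeminorm α b < ENNReal.ofReal δ) :
    ∀ᶠ n : ℕ in atTop, ∑ k ∈ Icc (-(n : ℤ)) n, ‖b k‖ ≤ n * (δ / log n ^ α) := by
  have hlog : ∀ᶠ n : ℕ in atTop, 0 < log n :=
    (tendsto_log_atTop.comp tendsto_natCast_atTop_atTop).eventually_gt_atTop 0
  filter_upwards [eventually_lt_of_limsup_lt hb, hlog] with n hn hlogn
  obtain ⟨hlt, hδ⟩ := ENNReal.ofReal_lt_ofReal_iff'.1 hn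
  have hn1 : (1 : ℝ) ≤ n := ((log_pos_iff n.cast_nonneg).1 hlogn).le
  have hpow : (n : ℝ) ^ (α - 1) ≤ n := by
    simpa using rpow_le_rpow_of_exponent_le hn1 (show α - 1 ≤ 1 by linarith)
  have hlt' : (∑ k ∈ Icc (-(n : ℤ)) n, ‖b k‖) * log n ^ α < δ * n ^ (α - 1) := by
    rwa [div_mul_eq_mul_div, div_lt_iff₀ (by positivity), mul_comm (log n ^ α)] at hlt
  rw [mul_div_assoc', le_div_iff₀ (by positivity)]
  nlinarith

theorem exists_norm_hilbertPartialSum_sub_le {α δ : ℝ} (hα₁ : 1 < α) (hα₂ : α ≤ 2) {b : ℤ → ℂ}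
    (hb : alphaSeminorm α b < ENNReal.ofReal δ) :
    ∃ N, ∀ m n, N ≤ m → m ≤ n → ‖hilbertPartialSum b n - hilbertPartialSum b m‖ ≤
      (2 + ∑' j : ℕ, 1 / (j * log j ^ α)) * δ := by
  have hδ : 0 < δ := ENNReal.ofReal_pos.1 (hb.trans_le' bot_le)
  have hlog : ∀ᶠ n : ℕ in atTop, 1 ≤ log n :=
    (tendsto_log_atTop.comp tendsto_natCast_atTop_atTop).eventually_ge_atTop 1
  obtain ⟨N, hN⟩ :=
    eventually_atTop.1 ((eventually_sum_norm_le_of_alphaSeminorm_lt hα₂ hb).and hlog)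
  refine ⟨N, fun m n hm hmn => ?_⟩
  set ψ : ℕ → ℝ := fun j => δ / log j ^ α
  have hψ_nonneg (j : ℕ) : 0 ≤ ψ j := by have := log_natCast_nonneg j; positivity
  have hψ_le (j : ℕ) (hj : N ≤ j) : ψ j ≤ δ :=
    div_le_self hδ.le (one_le_rpow (hN j hj).2 (by linarith))
  have hS (j : ℕ) (hj : j ∈ Icc m n) :
      ‖∑ i ∈ Ioc 0 j, (b i - b (-(i : ℤ)))‖ ≤ (j + 1) * ψ j :=
    calc ‖∑ i ∈ Ioc 0 j, (b i - b (-(i : ℤ)))‖ ≤ ∑ k ∈ Icc (-(j : ℤ)) j, ‖b k‖ :=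
          norm_sum_Ioc_sub_neg_le b j
      _ ≤ j * ψ j := (hN j (hm.trans (mem_Icc.1 hj).1)).1
      _ ≤ (j + 1) * ψ j := mul_le_mul_of_nonneg_right (by linarith) (hψ_nonneg j)
  rw [hilbertPartialSum_eq_sum_Ioc, hilbertPartialSum_eq_sum_Ioc,
    ← sum_Ioc_consecutive _ (Nat.zero_le m) hmn, add_sub_cancel_left]
  calc ‖∑ j ∈ Ioc m n, (b j - b (-(j : ℤ))) / j‖
      ≤ ψ n + ψ m + ∑ j ∈ Ioc m n, ψ j / j := norm_sum_Ioc_div_natCast_le _ ψ hmn hS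
    _ = ψ n + ψ m + δ * ∑ j ∈ Ioc m n, 1 / (j * log j ^ α) := by
        rw [mul_sum]; congr 1; exact sum_congr rfl fun j _ => by ring
    _ ≤ δ + δ + δ * ∑' j : ℕ, 1 / (j * log j ^ α) := by
        gcongr
        · exact hψ_le n (hm.trans hmn)
        · exact hψ_le m hm
        · exact (summable_one_div_nat_mul_log_rpow hα₁).sum_le_tsum _
            fun j _ => one_div_nat_mul_log_rpow_nonneg α j
    _ = (2 + ∑' j : ℕ, 1 / (j * log j ^ α)) * δ := by ring

/-- Proposition 3.1(a): if each `a^r` is a Hilbert sequence and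
`‖a^r − a‖_α → 0` as `r → ∞` for some `1 < α ≤ 2`, then `a` is a Hilbert
sequence. -/
theorem hilbertSeq_of_seminorm_limit (α : ℝ) (hα1 : 1 < α) (hα2 : α ≤ 2)
    (ar : ℕ → ℤ → ℂ) (a : ℤ → ℂ)
    (hHilbert : ∀ r : ℕ, IsHilbertSeq (ar r))
    (hconv : Tendsto (fun r : ℕ => alphaSeminorm α (fun k => ar r k - a k))
      atTop (nhds 0)) :
    IsHilbertSeq a := by
  set K : ℝ := 2 + ∑' j : ℕ, 1 / (j * log j ^ α)
  have hK : 0 < K := by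
    have : 0 ≤ ∑' j : ℕ, 1 / ((j : ℝ) * log j ^ α) :=
      tsum_nonneg (one_div_nat_mul_log_rpow_nonneg α)
    positivity
  refine cauchySeq_tendsto_of_complete (u := hilbertPartialSum a) ?_
  refine cauchySeq_of_forall_exists_cauchySeq_near fun ε hε => ?_
  have hδ : (0 : ENNReal) < ENNReal.ofReal (ε / K) := ENNReal.ofReal_pos.2 (by positivity)
  obtain ⟨r, hr⟩ := (hconv.eventually_lt_const hδ).exists
  obtain ⟨N, hN⟩ := exists_norm_hilbertPartialSum_sub_le hα1 hα2 hr
  obtain ⟨L, hL⟩ := hHilbert r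
  refine ⟨hilbertPartialSum (ar r), hL.cauchySeq, N, fun m n hm hmn => ?_⟩
  simp only [← hilbertPartialSum_sub]
  calc _ ≤ K * (ε / K) := hN m n hm hmn
    _ = ε := mul_div_cancel₀ ε hK.ne'
end
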